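/- arXiv:0706.1523 — 3 statements merged into one kernel-verified Lean document; each statement's English description precedes it below -/
import Mathlib

section
/- For all integers a, b ≥ 1, the quotient of the polynomial ring ℂ[x,y] by the ideal generated by x^a + y^b and x·y is a finite-dimensional ℂ-vector space of dimension exactly a + b. -/
/-!
Modulo `I = (x^a + y^b, xy)` the mixed monomials vanish, `x^(a+1) = x (x^a + y^b) - y^(b-1) xy`
vanishes and `y^b ≡ -x^a`, so the classes of `x, …, x^a` and `1, y, …, y^(b-1)` span the quotient:
their span contains `1` and is stable under multiplication by `x` and `y`.
They are independent because on the axes an element `f (x^a + y^b) + g xy` of `I` looks like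
`f x^a` and `f y^b`: its coefficients at `1, x, …, x^(a-1)` and `y, …, y^(b-1)` vanish and those
at `x^a` and `y^b` both equal `f(0)`. A combination of the `a + b` monomials has no `y^b` term,
so if it lies in `I` then `f(0) = 0` and all its coefficients vanish.
-/

open MvPolynomial

theorem Submodule.eq_top_of_one_mem_of_mul_mem {R A : Type*} [CommSemiring R] [Semiring A]
    [Algebra R A] {s : Set A} (hs : Algebra.adjoin R s = ⊤) {S : Submodule R A} (h1 : 1 ∈ S)
    (hmul : ∀ x ∈ s, ∀ y ∈ S, x * y ∈ S) : S = ⊤ := by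
  have hstable : ∀ z : A, ∀ y ∈ S, z * y ∈ S := fun z => by
    induction (hs ▸ Algebra.mem_top : z ∈ Algebra.adjoin R s) using Algebra.adjoin_induction with
    | mem x hx => exact hmul x hx
    | algebraMap r => exact fun y hy => by simpa [Algebra.smul_def] using S.smul_mem r hy
    | add x x' _ _ hx hx' =>
      exact fun y hy => by simpa [add_mul] using S.add_mem (hx y hy) (hx' y hy)
    | mul x x' _ _ hx hx' => exact fun y hy => by simpa [mul_assoc] using hx _ (hx' y hy)
  exact eq_top_iff.mpr fun z _ => by simpa using hstable z 1 h1

noncomputable def nodalIdeal (K : Type*) [CommRing K] (a b : ℕ) :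
    Ideal (MvPolynomial (Fin 2) K) :=
  Ideal.span {X 0 ^ a + X 1 ^ b, X 0 * X 1}

noncomputable def nodalExponent (a b : ℕ) : Fin a ⊕ Fin b → Fin 2 →₀ ℕ :=
  Sum.elim (fun i => Finsupp.single 0 (i + 1)) (fun j => Finsupp.single 1 j)

theorem nodalExponent_injective (a b : ℕ) : Function.Injective (nodalExponent a b) := by
  refine Function.Injective.sumElim ?_ ?_ fun i j h => ?_
  · intro i i' h
    simpa [Fin.ext_iff] using Finsupp.single_injective 0 h
  · intro j j' h
    simpa [Fin.ext_iff] using Finsupp.single_injective 1 h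
  · simpa using congr($h 0)

variable {K : Type*} [CommRing K] {a b : ℕ}

theorem exists_coeff_axes_of_mem_nodalIdeal (ha : 1 ≤ a) (hb : 1 ≤ b)
    {p : MvPolynomial (Fin 2) K} (hp : p ∈ nodalIdeal K a b) :
    ∃ f : MvPolynomial (Fin 2) K, ∀ n,
      coeff (Finsupp.single 0 n) p =
          (if a ≤ n then coeff (Finsupp.single 0 (n - a)) f else 0) ∧
      coeff (Finsupp.single 1 n) p =
          (if b ≤ n then coeff (Finsupp.single 1 (n - b)) f else 0) := by
  obtain ⟨f, g, rfl⟩ := Ideal.mem_span_pair.mp hp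
  refine ⟨f, fun n => ?_⟩
  have hxy : (X 0 * X 1 : MvPolynomial (Fin 2) K) =
      monomial (Finsupp.single 0 1 + Finsupp.single 1 1) 1 := by
    simp [X, monomial_mul]
  simp only [X_pow_eq_monomial, hxy, mul_add, coeff_add, coeff_mul_monomial',
    Finsupp.single_le_iff, ← Finsupp.single_tsub, mul_one]
  simp [Finsupp.le_def, Fin.forall_fin_two]
  omega

theorem eq_zero_of_mem_nodalIdeal_of_support_subset (ha : 1 ≤ a) (hb : 1 ≤ b)
    {p : MvPolynomial (Fin 2) K} (hp : p ∈ nodalIdeal K a b)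
    (hsupp : ↑p.support ⊆ Set.range (nodalExponent a b)) : p = 0 := by
  obtain ⟨f, hf⟩ := exists_coeff_axes_of_mem_nodalIdeal ha hb hp
  have hyb : coeff (Finsupp.single 1 b) p = 0 := by
    refine notMem_support_iff.mp fun hmem => ?_
    obtain ⟨k, hk⟩ := hsupp hmem
    cases k with
    | inl i => simpa [nodalExponent] using congr($hk 0)
    | inr j => exact j.isLt.ne (by simpa [nodalExponent] using congr($hk 1))
  ext d
  by_cases hd : d ∈ Set.range (nodalExponent a b)
  · obtain ⟨k | j, rfl⟩ := hd
    · by_cases hk : (k : ℕ) + 1 < a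
      · simpa [nodalExponent, Nat.not_le.mpr hk] using (hf (k + 1)).1
      · have hxa := (hf a).1
        have hyb' := (hf b).2
        simp only [le_refl, ite_true, tsub_self, Finsupp.single_zero] at hxa hyb'
        simp only [nodalExponent, Sum.elim_inl, coeff_zero]
        rw [show (k : ℕ) + 1 = a by omega, hxa, ← hyb', hyb]
    · simpa [nodalExponent, Nat.not_le.mpr j.isLt] using (hf j).2
  · exact notMem_support_iff.mp fun hmem => hd (hsupp hmem)

noncomputable def nodalMonomial (K : Type*) [CommRing K] (a b : ℕ) (k : Fin a ⊕ Fin b) :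
    MvPolynomial (Fin 2) K :=
  monomial (nodalExponent a b k) 1

@[simp] theorem nodalMonomial_inl (i : Fin a) :
    nodalMonomial K a b (.inl i) = X 0 ^ (i + 1 : ℕ) := by
  simp [nodalMonomial, nodalExponent, X_pow_eq_monomial]

@[simp] theorem nodalMonomial_inr (j : Fin b) : nodalMonomial K a b (.inr j) = X 1 ^ (j : ℕ) := by
  simp [nodalMonomial, nodalExponent, X_pow_eq_monomial]

theorem linearIndependent_mk_nodalMonomial (ha : 1 ≤ a) (hb : 1 ≤ b) :
    LinearIndependent K (Ideal.Quotient.mkₐ K (nodalIdeal K a b) ∘ nodalMonomial K a b) := by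
  have hv : LinearIndependent K (nodalMonomial K a b) :=
    (basisMonomials (Fin 2) K).linearIndependent.comp _ (nodalExponent_injective a b)
  refine hv.map (f := (Ideal.Quotient.mkₐ K (nodalIdeal K a b)).toLinearMap) ?_
  rw [Submodule.disjoint_def]
  intro p hspan hker
  refine eq_zero_of_mem_nodalIdeal_of_support_subset ha hb
    (Ideal.Quotient.eq_zero_iff_mem.mp hker) ?_
  have hrange :
      Set.range (nodalMonomial K a b) = (monomial · 1) '' Set.range (nodalExponent a b) :=
    Set.range_comp (monomial · 1) (nodalExponent a b)
  rwa [hrange, ← restrictSupport_eq_span] at hspan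

theorem X_zero_mul_X_one_mem_nodalIdeal : X 0 * X 1 ∈ nodalIdeal K a b :=
  Ideal.subset_span (by simp)

theorem X_zero_pow_succ_mem_nodalIdeal (hb : 1 ≤ b) : X 0 ^ (a + 1) ∈ nodalIdeal K a b := by
  obtain ⟨b, rfl⟩ := Nat.exists_eq_add_of_le' hb
  exact Ideal.mem_span_pair.mpr ⟨X 0, -X 1 ^ b, by ring⟩

theorem mk_X_one_pow_eq_neg :
    Ideal.Quotient.mkₐ K (nodalIdeal K a b) (X 1 ^ b) =
      -Ideal.Quotient.mkₐ K (nodalIdeal K a b) (X 0 ^ a) := by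
  rw [eq_neg_iff_add_eq_zero, ← map_add, Ideal.Quotient.mkₐ_eq_mk,
    Ideal.Quotient.eq_zero_iff_mem, add_comm]
  exact Ideal.subset_span (by simp)

theorem mk_X_mul_nodalMonomial_mem_span (ha : 1 ≤ a) (hb : 1 ≤ b) (i : Fin 2)
    (k : Fin a ⊕ Fin b) :
    Ideal.Quotient.mkₐ K (nodalIdeal K a b) (X i * nodalMonomial K a b k) ∈
      Submodule.span K
        (Set.range (Ideal.Quotient.mkₐ K (nodalIdeal K a b) ∘ nodalMonomial K a b)) := by
  set π := Ideal.Quotient.mkₐ K (nodalIdeal K a b)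
  set S := Submodule.span K (Set.range (π ∘ nodalMonomial K a b))
  have hbasis (k) : π (nodalMonomial K a b k) ∈ S := Submodule.subset_span ⟨k, rfl⟩
  have hideal {p} (hp : p ∈ nodalIdeal K a b) : π p ∈ S := by
    rw [Ideal.Quotient.mkₐ_eq_mk, Ideal.Quotient.eq_zero_iff_mem.mpr hp]
    exact S.zero_mem
  have hmixed {p} (hp : X 0 * X 1 ∣ p) : π p ∈ S :=
    hideal (Ideal.mem_of_dvd _ hp X_zero_mul_X_one_mem_nodalIdeal)
  revert i
  refine Fin.forall_fin_two.mpr ⟨?_, ?_⟩ <;> rcases k with j | j <;>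
    simp only [nodalMonomial_inl, nodalMonomial_inr]
  · by_cases hj : (j : ℕ) + 1 < a
    · simpa [← pow_succ'] using hbasis (.inl ⟨j + 1, hj⟩)
    · rw [← pow_succ', show (j : ℕ) + 1 = a by omega]
      exact hideal (X_zero_pow_succ_mem_nodalIdeal hb)
  · rcases Nat.eq_zero_or_eq_succ_pred j with hj | hj
    · simpa [hj] using hbasis (.inl ⟨0, ha⟩)
    · exact hmixed (by rw [hj, pow_succ']; exact mul_dvd_mul_left _ (dvd_mul_right _ _))
  · refine hmixed ?_
    rw [pow_succ', mul_left_comm]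
    exact mul_dvd_mul_left _ (dvd_mul_right _ _)
  · by_cases hj : (j : ℕ) + 1 < b
    · simpa [← pow_succ'] using hbasis (.inr ⟨j + 1, hj⟩)
    · rw [← pow_succ', show (j : ℕ) + 1 = b by omega, mk_X_one_pow_eq_neg]
      have := S.neg_mem (hbasis (.inl ⟨a - 1, by omega⟩))
      rwa [nodalMonomial_inl, Nat.sub_add_cancel ha] at this

theorem span_mk_nodalMonomial (ha : 1 ≤ a) (hb : 1 ≤ b) :
    Submodule.span K
      (Set.range (Ideal.Quotient.mkₐ K (nodalIdeal K a b) ∘ nodalMonomial K a b)) = ⊤ := by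
  set π := Ideal.Quotient.mkₐ K (nodalIdeal K a b)
  refine Submodule.eq_top_of_one_mem_of_mul_mem (s := Set.range (π ∘ X)) ?_ ?_ ?_
  · rw [Set.range_comp, Algebra.adjoin_image, adjoin_range_X, Algebra.map_top,
      AlgHom.range_eq_top]
    exact Ideal.Quotient.mkₐ_surjective K _
  · have h1 : π (nodalMonomial K a b (.inr ⟨0, hb⟩)) = 1 := by simp
    exact h1 ▸ Submodule.subset_span ⟨_, rfl⟩
  · rintro _ ⟨i, rfl⟩ y hy
    refine (Submodule.map_span_le (LinearMap.mulLeft K (π (X i))) _ _).mpr ?_ ⟨y, hy, rfl⟩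
    rintro _ ⟨k, rfl⟩
    rw [LinearMap.mulLeft_apply, Function.comp_apply, ← map_mul]
    exact mk_X_mul_nodalMonomial_mem_span ha hb i k

noncomputable def nodalBasis (ha : 1 ≤ a) (hb : 1 ≤ b) :
    Module.Basis (Fin a ⊕ Fin b) K (MvPolynomial (Fin 2) K ⧸ nodalIdeal K a b) :=
  .mk (linearIndependent_mk_nodalMonomial ha hb) (span_mk_nodalMonomial ha hb).ge

/-- For all integers `a, b ≥ 1`, the quotient of the polynomial ring
`ℂ[x,y]` by the ideal generated by `x^a + y^b` and `x*y` is a finite-dimensional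
`ℂ`-vector space of dimension exactly `a + b`. -/
theorem quotient_dim_eq_add (a b : ℕ) (ha : 1 ≤ a) (hb : 1 ≤ b) :
    FiniteDimensional ℂ
      (MvPolynomial (Fin 2) ℂ ⧸
        (Ideal.span {MvPolynomial.X 0 ^ a + MvPolynomial.X 1 ^ b,
          MvPolynomial.X 0 * MvPolynomial.X 1} : Ideal (MvPolynomial (Fin 2) ℂ))) ∧
    Module.finrank ℂ
      (MvPolynomial (Fin 2) ℂ ⧸
        (Ideal.span {MvPolynomial.X 0 ^ a + MvPolynomial.X 1 ^ b,
          MvPolynomial.X 0 * MvPolynomial.X 1} : Ideal (MvPolynomial (Fin 2) ℂ))) = a + b := by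
  let B : Module.Basis (Fin a ⊕ Fin b) ℂ _ := nodalBasis ha hb
  exact ⟨.of_basis B, (Module.finrank_eq_card_basis B).trans (by simp)⟩
end

section
/- Fix an integer n ≥ 1. There exist polynomials Λ₁,…,Λ_n in n variables over ℂ such that for every a = (a₂,…,a_{n+1}) ∈ ℂⁿ, the monic degree-n polynomial ∏_{c}(T − f_a(c)), where the product ranges over the multiset of roots c of f_a′/(n+1) (with multiplicity), equals Tⁿ + Λ₁(a)T^{n−1} + ⋯ + Λ_n(a). In other words, the Lyashko–Looijenga map, sending a to the unordered multiset of critical values of f_a, extends to a polynomial map ℂⁿ → ℂⁿ. -/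
/-!
The critical values of `f_a` are the values of `f_a` at the roots of `f_a'`, so `∏_c (T - f_a(c))`
is, up to the factor `lc(f_a')^(n+1) = (n+1)^(n+1)`, the resultant `Res_x(f_a'(x), T - f_a(x))`.
A resultant is the Sylvester determinant of the coefficients, and the `x`-degrees `n` and `n + 1`
of the two polynomials do not depend on `a`; hence it is the specialization at `a` of a single
resultant over `ℂ[a₂, …, a_{n+1}][T]`, whose coefficients are the required polynomials.
-/

open Polynomial

/-- The standard versal unfolding of the singularity `A_n`:
`f_a(x) = x^(n+1) + a₂ x^(n-1) + a₃ x^(n-2) + ⋯ + a_n x + a_{n+1}`,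
where `a i` (for `i : Fin n`) denotes `a_{i+2}`, which multiplies `x^(n-1-i)`. -/
noncomputable def fA (n : ℕ) (a : Fin n → ℂ) : Polynomial ℂ :=
  X ^ (n + 1) + ∑ i : Fin n, C (a i) * X ^ (n - 1 - (i : ℕ))

namespace Polynomial

variable {R : Type*} [CommRing R]

theorem resultant_map_C_C_X_sub_map_C [IsDomain R] {p : R[X]} (hp : p.Splits) (f : R[X])
    {N : ℕ} (hN : f.natDegree ≤ N) :
    resultant (p.map C) (C X - f.map C) p.natDegree N =
      C (p.leadingCoeff ^ N) * (p.roots.map fun c => X - C (f.eval c)).prod := by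
  have hg : (C X - f.map C : R[X][X]).natDegree ≤ N :=
    (natDegree_sub_le _ _).trans (by simpa using natDegree_map_le.trans hN)
  have h := resultant_eq_prod_eval (p.map C) (C X - f.map C) N hg (hp.map C)
  rw [natDegree_map_eq_of_injective C_injective] at h
  rw [h, leadingCoeff_map_of_injective C_injective, hp.roots_map_of_injective C_injective,
    Multiset.map_map, map_pow]
  congr 2
  refine Multiset.map_congr rfl fun c _ => ?_
  simp [eval_map, eval₂_at_apply]

theorem Monic.eq_X_pow_add_sum_fin {p : R[X]} (hp : p.Monic) {n : ℕ} (hn : p.natDegree = n) :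
    p = X ^ n + ∑ i : Fin n, C (p.coeff (n - 1 - i)) * X ^ (n - 1 - i) := by
  conv_lhs => rw [hp.as_sum, hn, ← Finset.sum_range_reflect,
    ← Fin.sum_univ_eq_sum_range fun i => C (p.coeff (n - 1 - i)) * X ^ (n - 1 - i)]

end Polynomial

section VersalUnfolding

variable {n : ℕ}

theorem natDegree_fA_tail_le (a : Fin n → ℂ) :
    (∑ i : Fin n, C (a i) * X ^ (n - 1 - (i : ℕ))).natDegree ≤ n :=
  natDegree_sum_le_of_forall_le _ _ fun i _ => (natDegree_C_mul_X_pow_le _ _).trans (by omega)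

theorem monic_fA (a : Fin n → ℂ) : (fA n a).Monic :=
  monic_X_pow_add <| (degree_le_of_natDegree_le (natDegree_fA_tail_le a)).trans_lt
    (by exact_mod_cast Nat.lt_succ_self n)

theorem natDegree_fA (a : Fin n → ℂ) : (fA n a).natDegree = n + 1 := by
  rw [fA, natDegree_add_eq_left_of_natDegree_lt, natDegree_X_pow]
  simpa only [natDegree_X_pow] using Nat.lt_succ_of_le (natDegree_fA_tail_le a)

theorem natDegree_derivative_fA (a : Fin n → ℂ) : (derivative (fA n a)).natDegree = n := by
  rw [natDegree_derivative, natDegree_fA, Nat.add_sub_cancel]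

theorem leadingCoeff_derivative_fA (a : Fin n → ℂ) :
    (derivative (fA n a)).leadingCoeff = n + 1 := by
  rw [leadingCoeff_derivative, (monic_fA a).leadingCoeff, natDegree_fA]
  push_cast
  ring

variable (n) in
noncomputable def genericFA : (MvPolynomial (Fin n) ℂ)[X] :=
  X ^ (n + 1) + ∑ i : Fin n, C (MvPolynomial.X i) * X ^ (n - 1 - (i : ℕ))

theorem map_eval_genericFA (a : Fin n → ℂ) :
    (genericFA n).map (MvPolynomial.eval a) = fA n a := by
  simp [genericFA, fA, Polynomial.map_sum]

variable (n) in
noncomputable def criticalValueResultant : (MvPolynomial (Fin n) ℂ)[X] :=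
  resultant ((derivative (genericFA n)).map C) (C X - (genericFA n).map C) n (n + 1)

theorem map_eval_criticalValueResultant (a : Fin n → ℂ) :
    (criticalValueResultant n).map (MvPolynomial.eval a) =
      C ((n + 1 : ℂ) ^ (n + 1)) *
        ((derivative (fA n a)).roots.map fun c => X - C ((fA n a).eval c)).prod := by
  have h := resultant_map_C_C_X_sub_map_C (IsAlgClosed.splits (derivative (fA n a))) (fA n a)
    (natDegree_fA a).le
  rw [natDegree_derivative_fA, leadingCoeff_derivative_fA] at h
  have hC (q : (MvPolynomial (Fin n) ℂ)[X]) :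
      (q.map C).map (mapRingHom (MvPolynomial.eval a)) = (q.map (MvPolynomial.eval a)).map C := by
    rw [Polynomial.map_map, Polynomial.map_map, mapRingHom_comp_C]
  have hmap := resultant_map_map ((derivative (genericFA n)).map C) (C X - (genericFA n).map C)
    n (n + 1) (mapRingHom (MvPolynomial.eval a))
  rw [coe_mapRingHom, hC, Polynomial.map_sub, hC, Polynomial.map_C, coe_mapRingHom, map_X,
    ← derivative_map, map_eval_genericFA] at hmap
  rw [criticalValueResultant, ← hmap, h]

end VersalUnfolding

theorem lyashko_looijenga_polynomial_An_general (n : ℕ) :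
    ∃ Λ : Fin n → MvPolynomial (Fin n) ℂ,
      ∀ a : Fin n → ℂ,
        (((Polynomial.derivative (fA n a)).roots).map
            (fun c => X - C ((fA n a).eval c))).prod
          = X ^ n + ∑ i : Fin n,
              C (MvPolynomial.eval a (Λ i)) * X ^ (n - 1 - (i : ℕ)) := by
  refine ⟨fun i => MvPolynomial.C ((n + 1 : ℂ) ^ (n + 1))⁻¹ *
    (criticalValueResultant n).coeff (n - 1 - i), fun a => ?_⟩
  set P := ((derivative (fA n a)).roots.map fun c => X - C ((fA n a).eval c)).prod
  have hP : P.Monic := monic_multiset_prod_of_monic _ _ fun c _ => monic_X_sub_C _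
  have hdeg : P.natDegree = n := by
    simp [P, natDegree_multiset_prod_of_monic, monic_X_sub_C,
      ← (IsAlgClosed.splits _).natDegree_eq_card_roots, natDegree_fA]
  have hcoeff (k : ℕ) : MvPolynomial.eval a
      (MvPolynomial.C ((n + 1 : ℂ) ^ (n + 1))⁻¹ * (criticalValueResultant n).coeff k) = P.coeff k := by
    rw [map_mul, MvPolynomial.eval_C, ← coeff_map, map_eval_criticalValueResultant, coeff_C_mul,
      inv_mul_cancel_left₀ (pow_ne_zero _ (Nat.cast_add_one_ne_zero n))]
  simp_rw [hcoeff]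
  exact hP.eq_X_pow_add_sum_fin hdeg

/-- The Lyashko–Looijenga map for the versal unfolding of `A_n`,
sending `a` to the unordered multiset of critical values of `f_a` (the multiset image
under `f_a` of the root multiset of `f_a'/(n+1)`, which coincides with that of `f_a'`),
extends to a polynomial map `ℂⁿ → ℂⁿ`: there are polynomials `Λ₁, …, Λ_n` in `n`
variables such that `∏_{c} (T - f_a(c)) = Tⁿ + Λ₁(a) T^(n-1) + ⋯ + Λ_n(a)`. -/
theorem lyashko_looijenga_polynomial_An (n : ℕ) (hn : 1 ≤ n) :
    ∃ Λ : Fin n → MvPolynomial (Fin n) ℂ,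
      ∀ a : Fin n → ℂ,
        (((Polynomial.derivative (fA n a)).roots).map
            (fun c => X - C ((fA n a).eval c))).prod
          = X ^ n + ∑ i : Fin n,
              C (MvPolynomial.eval a (Λ i)) * X ^ (n - 1 - (i : ℕ)) :=
  lyashko_looijenga_polynomial_An_general n
end

section
/- Fix integers k, ℓ ≥ 1, and let L(x) = Σ_{j=−ℓ}^{k} c_j x^j be any Laurent polynomial with c_k ≠ 0 and c_{−ℓ} ≠ 0. Then the number of pairs (α, p), where α ∈ ℂ∖{0} and p = (ε, a₁,…,a_{k−1}, c, b₁,…,b_{ℓ−1}) is a parameter tuple with ε ≠ 0, such that g_p(x) = L(αx) for all x ∈ ℂ∖{0}, is exactly k·ℓ. That is, each equivalence class of Laurent polynomials of bidegree (k,ℓ) under linear changes of the source coordinate has exactly kℓ representatives in the standard versal deformation of the singularity I_{k,ℓ}. -/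
/-!
Put `u = α⁻¹`, `β = εα` and substitute `x = u y`: then `y^ℓ · g_p(u y)` and `y^ℓ · L(y)` are
polynomials of degree `k + ℓ` in `y`, so `g_p(x) = L(αx)` for `x ≠ 0` is an equality of
coefficients. The leading one says `u^k = c_k`, the constant one says `β^ℓ = c_{-ℓ}`, and each
remaining one determines exactly one of `a_i`, `c`, `b_j`. Hence the representatives are in
bijection with the `k · ℓ` pairs of roots `(u, β)`.
-/

open Polynomial

/-- The standard versal unfolding of the singularity `I_{k,ℓ}`: the Laurent polynomial
`g_p(x) = x^k + a₁x^(k-1) + ⋯ + a_{k-1}x + c + b_{ℓ-1}(ε/x) + ⋯ + b₁(ε/x)^(ℓ-1) + (ε/x)^ℓ`,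
where `a i` (for `i : Fin (k-1)`) denotes `a_{i+1}` (multiplying `x^(k-1-i)`) and
`b j` (for `j : Fin (ℓ-1)`) denotes `b_{j+1}` (multiplying `(ε/x)^(ℓ-1-j)`). -/
noncomputable def gI (k l : ℕ) (ε : ℂ) (a : Fin (k - 1) → ℂ) (c : ℂ)
    (b : Fin (l - 1) → ℂ) (x : ℂ) : ℂ :=
  x ^ k + (∑ i : Fin (k - 1), a i * x ^ (k - 1 - (i : ℕ))) + c
    + (∑ j : Fin (l - 1), b j * (ε / x) ^ (l - 1 - (j : ℕ))) + (ε / x) ^ l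

theorem Finset.sum_range_eq_blocks {M : Type*} [AddCommMonoid M] {k l : ℕ} (hk : 1 ≤ k)
    (hl : 1 ≤ l) (g : ℕ → M) :
    ∑ m ∈ range (k + l + 1), g m = g (k + l) + ∑ i : Fin (k - 1), g (k + l - 1 - i) + g l
      + ∑ j : Fin (l - 1), g (j + 1) + g 0 := by
  obtain ⟨k, rfl⟩ := Nat.exists_eq_add_of_le' hk
  obtain ⟨l, rfl⟩ := Nat.exists_eq_add_of_le' hl
  have hupper :
      ∑ i ∈ range k, g (l + 1 + (i + 1)) = ∑ i ∈ range k, g (k + 1 + (l + 1) - 1 - i) := by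
    rw [← sum_range_reflect]
    exact sum_congr rfl fun i hi => congrArg g (by have := mem_range.1 hi; omega)
  rw [show k + 1 + (l + 1) + 1 = (l + 1) + (k + 1 + 1) by omega, sum_range_add, sum_range_succ',
    sum_range_succ, sum_range_succ', hupper,
    Fin.sum_univ_eq_sum_range (fun i => g (k + 1 + (l + 1) - 1 - i)),
    Fin.sum_univ_eq_sum_range (fun j => g (j + 1))]
  simp only [Nat.add_sub_cancel, add_zero, show l + 1 + (k + 1) = k + 1 + (l + 1) by omega]
  abel

theorem Polynomial.eq_of_eval_eq_of_ne_zero {R : Type*} [CommRing R] [IsDomain R] [Infinite R]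
    {p q : R[X]} (h : ∀ x ≠ 0, p.eval x = q.eval x) : p = q :=
  eq_of_infinite_eval_eq p q ((Set.finite_singleton 0).infinite_compl.mono fun x hx => h x hx)

theorem Complex.ncard_setOf_pow_eq {n : ℕ} (hn : 0 < n) {w : ℂ} (hw : w ≠ 0) :
    {z : ℂ | z ^ n = w}.ncard = n := by
  classical
  have hζ := Complex.isPrimitiveRoot_exp n hn.ne'
  rw [← nthRootsFinset_toSet hn, Set.ncard_coe_finset, nthRootsFinset_def,
    Multiset.toFinset_card_of_nodup (hζ.nthRoots_nodup hw), hζ.card_nthRoots,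
    if_pos (IsAlgClosed.exists_pow_nat_eq w hn)]

section BlockPoly

variable {R : Type*} [CommRing R] (k l : ℕ)

noncomputable def blockPoly (top : R) (A : Fin (k - 1) → R) (mid : R) (B : Fin (l - 1) → R)
    (bot : R) : R[X] :=
  C top * X ^ (k + l) + ∑ i, C (A i) * X ^ (k + l - 1 - (i : ℕ)) + C mid * X ^ l
    + ∑ j, C (B j) * X ^ ((j : ℕ) + 1) + C bot

variable {k l} {top : R} {A : Fin (k - 1) → R} {mid : R} {B : Fin (l - 1) → R} {bot : R}

theorem coeff_blockPoly (m : ℕ) :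
    (blockPoly k l top A mid B bot).coeff m = (if m = k + l then top else 0)
      + ∑ i : Fin (k - 1), (if m = k + l - 1 - i then A i else 0) + (if m = l then mid else 0)
      + ∑ j : Fin (l - 1), (if m = (j : ℕ) + 1 then B j else 0) + (if m = 0 then bot else 0) := by
  simp only [blockPoly, coeff_add, finsetSum_coeff, coeff_C_mul_X_pow, coeff_C]

theorem coeff_blockPoly_top (hk : 1 ≤ k) : (blockPoly k l top A mid B bot).coeff (k + l) = top := by
  rw [coeff_blockPoly]
  simp (disch := omega) [if_neg]

theorem coeff_blockPoly_upper (i : Fin (k - 1)) :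
    (blockPoly k l top A mid B bot).coeff (k + l - 1 - i) = A i := by
  rw [coeff_blockPoly, Finset.sum_eq_single i (fun i' _ hi' => if_neg fun h => hi' (by omega))
    (by simp)]
  simp (disch := omega) [if_neg]

theorem coeff_blockPoly_mid (hk : 1 ≤ k) (hl : 1 ≤ l) :
    (blockPoly k l top A mid B bot).coeff l = mid := by
  rw [coeff_blockPoly]
  simp (disch := omega) [if_neg]

theorem coeff_blockPoly_lower (j : Fin (l - 1)) :
    (blockPoly k l top A mid B bot).coeff ((j : ℕ) + 1) = B j := by
  rw [coeff_blockPoly, Finset.sum_eq_single j (fun j' _ hj' => if_neg fun h => hj' (by omega))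
    (by simp)]
  simp (disch := omega) [if_neg]

theorem coeff_blockPoly_zero (hl : 1 ≤ l) : (blockPoly k l top A mid B bot).coeff 0 = bot := by
  rw [coeff_blockPoly]
  simp (disch := omega) [if_neg]

variable {top' : R} {A' : Fin (k - 1) → R} {mid' : R} {B' : Fin (l - 1) → R} {bot' : R}

theorem blockPoly_inj (hk : 1 ≤ k) (hl : 1 ≤ l) :
    blockPoly k l top A mid B bot = blockPoly k l top' A' mid' B' bot' ↔
      top = top' ∧ A = A' ∧ mid = mid' ∧ B = B' ∧ bot = bot' := by
  refine ⟨fun h => ?_, by rintro ⟨rfl, rfl, rfl, rfl, rfl⟩; rfl⟩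
  have hcoeff (m : ℕ) := congrArg (coeff · m) h
  refine ⟨?_, funext fun i => ?_, ?_, funext fun j => ?_, ?_⟩
  · simpa only [coeff_blockPoly_top hk] using hcoeff (k + l)
  · simpa only [coeff_blockPoly_upper] using hcoeff (k + l - 1 - i)
  · simpa only [coeff_blockPoly_mid hk hl] using hcoeff l
  · simpa only [coeff_blockPoly_lower] using hcoeff (j + 1)
  · simpa only [coeff_blockPoly_zero hl] using hcoeff 0

theorem sum_C_mul_X_pow_eq_blockPoly (hk : 1 ≤ k) (hl : 1 ≤ l) (f : Fin (k + l + 1) → R) :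
    ∑ t, C (f t) * X ^ (t : ℕ) = blockPoly k l (f (Fin.last _))
      (fun i => f ⟨k + l - 1 - i, by omega⟩) (f ⟨l, by omega⟩) (fun j => f ⟨j + 1, by omega⟩)
      (f 0) := by
  let g : ℕ → R[X] := fun m => if h : m < k + l + 1 then C (f ⟨m, h⟩) * X ^ m else 0
  calc ∑ t, C (f t) * X ^ (t : ℕ) = ∑ t : Fin (k + l + 1), g t :=
        Finset.sum_congr rfl fun t _ => by simp only [g, dif_pos t.isLt]
    _ = _ := by
      rw [Fin.sum_univ_eq_sum_range g, Finset.sum_range_eq_blocks hk hl]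
      simp (disch := omega) only [g, blockPoly, dif_pos, pow_zero, mul_one]
      rfl

end BlockPoly

theorem eval_blockPoly_eq_pow_mul_gI {k l : ℕ} (ε : ℂ) (a : Fin (k - 1) → ℂ) (c : ℂ)
    (b : Fin (l - 1) → ℂ) (u : ℂ) {y : ℂ} (hy : y ≠ 0) :
    (blockPoly k l (u ^ k) (fun i => a i * u ^ (k - 1 - (i : ℕ))) c
      (fun j => b j * (ε / u) ^ (l - 1 - (j : ℕ))) ((ε / u) ^ l)).eval y
      = y ^ l * gI k l ε a c b (u * y) := by
  have htop : u ^ k * y ^ (k + l) = y ^ l * (u * y) ^ k := by ring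
  have hupper (i : Fin (k - 1)) : a i * u ^ (k - 1 - (i : ℕ)) * y ^ (k + l - 1 - (i : ℕ))
      = y ^ l * (a i * (u * y) ^ (k - 1 - (i : ℕ))) := by
    rw [show k + l - 1 - (i : ℕ) = l + (k - 1 - i) by omega]; ring
  have hdiv (n : ℕ) : (ε / (u * y)) ^ n * y ^ n = (ε / u) ^ n := by
    rw [div_mul_eq_div_div, div_pow (ε / u) y]; field_simp
  have hlower (j : Fin (l - 1)) : b j * (ε / u) ^ (l - 1 - (j : ℕ)) * y ^ ((j : ℕ) + 1)
      = y ^ l * (b j * (ε / (u * y)) ^ (l - 1 - (j : ℕ))) := by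
    have hsplit : y ^ l = y ^ (l - 1 - (j : ℕ)) * y ^ ((j : ℕ) + 1) := by
      rw [← pow_add]; congr 1; omega
    rw [← hdiv, hsplit]; ring
  have hbot : (ε / u) ^ l = y ^ l * (ε / (u * y)) ^ l := by rw [← hdiv]; ring
  simp only [blockPoly, gI, eval_add, eval_mul, eval_C, eval_pow, eval_X, eval_finsetSum, htop,
    hupper, hlower, hbot, ← Finset.mul_sum]
  ring

theorem eval_sum_C_mul_X_pow_eq_pow_mul {n : ℕ} (cf : Fin n → ℂ) (l : ℕ) {y : ℂ} (hy : y ≠ 0) :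
    (∑ t, C (cf t) * X ^ (t : ℕ)).eval y = y ^ l * ∑ t, cf t * y ^ ((t : ℤ) - l) := by
  simp only [eval_finsetSum, eval_mul, eval_C, eval_pow, eval_X, Finset.mul_sum]
  refine Finset.sum_congr rfl fun t _ => ?_
  rw [mul_left_comm, ← zpow_natCast y l, ← zpow_add₀ hy, add_sub_cancel, zpow_natCast]

theorem gI_eq_iff_blockPoly_eq {k l : ℕ} {α : ℂ} (hα : α ≠ 0) (ε : ℂ) (a : Fin (k - 1) → ℂ)
    (c : ℂ) (b : Fin (l - 1) → ℂ) (cf : Fin (k + l + 1) → ℂ) :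
    (∀ x : ℂ, x ≠ 0 → gI k l ε a c b x = ∑ t, cf t * (α * x) ^ ((t : ℤ) - l)) ↔
      blockPoly k l (α⁻¹ ^ k) (fun i => a i * α⁻¹ ^ (k - 1 - (i : ℕ))) c
        (fun j => b j * (ε * α) ^ (l - 1 - (j : ℕ))) ((ε * α) ^ l)
        = ∑ t, C (cf t) * X ^ (t : ℕ) := by
  simp only [← div_inv_eq_mul ε α]
  constructor
  · intro h
    refine eq_of_eval_eq_of_ne_zero fun y hy => ?_
    rw [eval_blockPoly_eq_pow_mul_gI _ _ _ _ _ hy, eval_sum_C_mul_X_pow_eq_pow_mul _ _ hy,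
      h _ (mul_ne_zero (inv_ne_zero hα) hy), mul_inv_cancel_left₀ hα]
  · intro h x hx
    have hαx : α * x ≠ 0 := mul_ne_zero hα hx
    have := congrArg (eval (α * x)) h
    rw [eval_blockPoly_eq_pow_mul_gI _ _ _ _ _ hαx, eval_sum_C_mul_X_pow_eq_pow_mul _ _ hαx,
      inv_mul_cancel_left₀ hα] at this
    exact mul_left_cancel₀ (pow_ne_zero _ hαx) this

noncomputable def versalRep (k l : ℕ) (cf : Fin (k + l + 1) → ℂ) (u β : ℂ) :
    ℂ × ℂ × (Fin (k - 1) → ℂ) × ℂ × (Fin (l - 1) → ℂ) :=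
  (u⁻¹, β * u, fun i => cf ⟨k + l - 1 - i, by omega⟩ / u ^ (k - 1 - (i : ℕ)), cf ⟨l, by omega⟩,
    fun j => cf ⟨j + 1, by omega⟩ / β ^ (l - 1 - (j : ℕ)))

theorem versalRep_injOn (k l : ℕ) (cf : Fin (k + l + 1) → ℂ) :
    Set.InjOn (fun p : ℂ × ℂ => versalRep k l cf p.1 p.2) {p | p.1 ≠ 0} := by
  rintro ⟨u, β⟩ hu ⟨u', β'⟩ - h
  simp only [versalRep, Prod.mk.injEq, inv_inj] at h
  obtain ⟨rfl, hβ, -⟩ := h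
  exact Prod.ext rfl (mul_right_cancel₀ hu hβ)

theorem setOf_gI_eq_image_versalRep {k l : ℕ} (hk : 1 ≤ k) (hl : 1 ≤ l)
    (cf : Fin (k + l + 1) → ℂ) (htop : cf (Fin.last (k + l)) ≠ 0) (hbot : cf 0 ≠ 0) :
    {q : ℂ × ℂ × (Fin (k - 1) → ℂ) × ℂ × (Fin (l - 1) → ℂ) |
        q.1 ≠ 0 ∧ q.2.1 ≠ 0 ∧
        ∀ x : ℂ, x ≠ 0 →
          gI k l q.2.1 q.2.2.1 q.2.2.2.1 q.2.2.2.2 x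
            = ∑ t : Fin (k + l + 1), cf t * (q.1 * x) ^ ((t : ℤ) - (l : ℤ))}
      = (fun p : ℂ × ℂ => versalRep k l cf p.1 p.2) ''
          ({u | u ^ k = cf (Fin.last (k + l))} ×ˢ {β | β ^ l = cf 0}) := by
  ext ⟨α, ε, a, c, b⟩
  simp only [Set.mem_ofPred_eq, Set.mem_image, Set.mem_prod, Prod.exists, versalRep,
    Prod.mk.injEq]
  constructor
  · rintro ⟨hα, hε, h⟩
    rw [gI_eq_iff_blockPoly_eq hα, sum_C_mul_X_pow_eq_blockPoly hk hl, blockPoly_inj hk hl] at h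
    obtain ⟨hu, ha, rfl, hb, hβ⟩ := h
    refine ⟨α⁻¹, ε * α, ⟨hu, hβ⟩, inv_inv α, by field_simp, funext fun i => ?_, rfl,
      funext fun j => ?_⟩
    · rw [← congrFun ha i]; field_simp
    · rw [← congrFun hb j]; field_simp
  · rintro ⟨u, β, ⟨hu, hβ⟩, rfl, rfl, rfl, rfl, rfl⟩
    have hu0 : u ≠ 0 := ne_zero_pow (by omega) (hu ▸ htop)
    have hβ0 : β ≠ 0 := ne_zero_pow (by omega) (hβ ▸ hbot)
    refine ⟨inv_ne_zero hu0, mul_ne_zero hβ0 hu0, ?_⟩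
    rw [gI_eq_iff_blockPoly_eq (inv_ne_zero hu0), sum_C_mul_X_pow_eq_blockPoly hk hl,
      blockPoly_inj hk hl]
    simp [hu, hβ, hu0, hβ0]

/-- Each equivalence class of Laurent polynomials of bidegree
`(k,ℓ)` under linear changes `x ↦ αx` of the source coordinate has exactly `kℓ`
representatives in the standard versal deformation of the singularity `I_{k,ℓ}`: for
any Laurent polynomial `L(x) = Σ_{j=-ℓ}^{k} c_j x^j` with `c_k ≠ 0` and `c_{-ℓ} ≠ 0`
(here `cf t` denotes `c_{t-ℓ}` for `t = 0, …, k+ℓ`), the number of pairs `(α, p)` with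
`α ≠ 0`, `p = (ε, a, c, b)`, `ε ≠ 0`, and `g_p(x) = L(αx)` for all `x ≠ 0`, is exactly
`k·ℓ`. -/
theorem versal_deformation_representatives_Ikl (k l : ℕ) (hk : 1 ≤ k) (hl : 1 ≤ l)
    (cf : Fin (k + l + 1) → ℂ) (htop : cf (Fin.last (k + l)) ≠ 0) (hbot : cf 0 ≠ 0) :
    {q : ℂ × ℂ × (Fin (k - 1) → ℂ) × ℂ × (Fin (l - 1) → ℂ) |
        q.1 ≠ 0 ∧ q.2.1 ≠ 0 ∧
        ∀ x : ℂ, x ≠ 0 →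
          gI k l q.2.1 q.2.2.1 q.2.2.2.1 q.2.2.2.2 x
            = ∑ t : Fin (k + l + 1), cf t * (q.1 * x) ^ ((t : ℤ) - (l : ℤ))}.ncard
      = k * l := by
  rw [setOf_gI_eq_image_versalRep hk hl cf htop hbot, Set.InjOn.ncard_image, Set.ncard_prod,
    Complex.ncard_setOf_pow_eq hk htop, Complex.ncard_setOf_pow_eq hl hbot]
  exact (versalRep_injOn k l cf).mono fun p hp => ne_zero_pow (by omega) (hp.1 ▸ htop)
end
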